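/- Third-order linear reduction of the one-body equation r̈ = h(t) r ∧ ṙ: let h : ℝ → ℝ be differentiable and let r : ℝ → ℝ³ be twice differentiable satisfying r̈(t) = h(t) ( r(t) × ṙ(t) ) for all t. Then r is three times differentiable and satisfies r⃛(t) = ḣ(t) ( r(t) × ṙ(t) ) + h(t)² [ r(t) ( r(t) · ṙ(t) ) − |r(t)|² ṙ(t) ] for all t. -/

import Mathlib

/-! Differentiate `r̈ = h (r × ṙ)` by the product rule: the term `ṙ × ṙ` vanishes, and
`r × r̈ = h r × (r × ṙ)` is expanded by the vector triple product (BAC–CAB) identity. -/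

open scoped RealInnerProductSpace

noncomputable section

/-- The cross product of two vectors in `ℝ³` (`EuclideanSpace ℝ (Fin 3)`). -/
noncomputable def cross3 (u v : EuclideanSpace ℝ (Fin 3)) : EuclideanSpace ℝ (Fin 3) :=
  WithLp.toLp 2 ![u 1 * v 2 - u 2 * v 1, u 2 * v 0 - u 0 * v 2, u 0 * v 1 - u 1 * v 0]

theorem cross3_eq_crossProduct (u v : EuclideanSpace ℝ (Fin 3)) :
    cross3 u v = WithLp.toLp 2 (crossProduct u.ofLp v.ofLp) := by
  rw [cross3, cross_apply]

theorem isBilinearMap_cross3 : IsBilinearMap ℝ cross3 where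
  add_left _ _ _ := by simp [cross3_eq_crossProduct]
  smul_left _ _ _ := by simp [cross3_eq_crossProduct]
  add_right _ _ _ := by simp [cross3_eq_crossProduct]
  smul_right _ _ _ := by simp [cross3_eq_crossProduct]

theorem cross3_self (u : EuclideanSpace ℝ (Fin 3)) : cross3 u u = 0 := by
  simp [cross3_eq_crossProduct]

theorem cross3_cross3 (u v w : EuclideanSpace ℝ (Fin 3)) :
    cross3 u (cross3 v w) = ⟪u, w⟫ • v - ⟪u, v⟫ • w := by
  simp only [cross3_eq_crossProduct, cross_cross_eq_smul_sub_smul',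
    EuclideanSpace.inner_eq_star_dotProduct, star_trivial, dotProduct_comm w.ofLp]
  rfl

theorem HasDerivAt.cross3 {u v : ℝ → EuclideanSpace ℝ (Fin 3)}
    {u' v' : EuclideanSpace ℝ (Fin 3)} {t : ℝ} (hu : HasDerivAt u u' t) (hv : HasDerivAt v v' t) :
    HasDerivAt (fun s ↦ cross3 (u s) (v s)) (cross3 (u t) v' + cross3 u' (v t)) t :=
  isBilinearMap_cross3.toContinuousBilinearMap.hasDerivAt_of_bilinear (fun _ ↦ hu) (fun _ ↦ hv)

/-- Third-order linear reduction (equation (A.16) of the paper) of the one-body equation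
`r̈ = h(t) r ∧ ṙ`: `r⃛ = ḣ (r × ṙ) + h² [ r (r·ṙ) − ‖r‖² ṙ ]`. -/
theorem third_order_reduction_angular_force (h : ℝ → ℝ) (hh : Differentiable ℝ h)
    (r r' r'' : ℝ → EuclideanSpace ℝ (Fin 3))
    (hr : ∀ t, HasDerivAt r (r' t) t)
    (hr' : ∀ t, HasDerivAt r' (r'' t) t)
    (hODE : ∀ t, r'' t = h t • cross3 (r t) (r' t)) :
    ∀ t, HasDerivAt r''
      (deriv h t • cross3 (r t) (r' t)
        + h t ^ 2 • (⟪r t, r' t⟫ • r t - ‖r t‖ ^ 2 • r' t)) t := by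
  intro t
  have hcross : HasDerivAt (fun s ↦ cross3 (r s) (r' s))
      (h t • (⟪r t, r' t⟫ • r t - ‖r t‖ ^ 2 • r' t)) t := by
    simpa [hODE, cross3_self, isBilinearMap_cross3.smul_right, cross3_cross3,
      real_inner_self_eq_norm_sq] using (hr t).cross3 (hr' t)
  rw [funext hODE]
  refine ((hh t).hasDerivAt.smul hcross).congr_deriv ?_
  rw [smul_smul, ← sq, add_comm]
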